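/- If M satisfies the base axioms, then V(x) ≤ x for every x ∈ M. -/

import Mathlib

/-- The base axioms for a Büchi-arithmetic-like structure `M` with distinguished
element `one` and function `V`, over the base `k`. -/
structure BuchiAxioms (k : ℕ) (M : Type*) [AddCancelCommMonoid M] [LinearOrder M]
    (one : M) (V : M → M) : Prop where
  transl : ∀ x y z : M, x ≤ y ↔ x + z ≤ y + z
  one_pos : (0 : M) < one
  discrete : ∀ x y : M, x < y → x + one ≤ y
  ord0 : ∀ x : M, 0 ≤ x
  ord1 : ∀ x y : M, x ≤ y ↔ ∃ z ≤ y, z + x = y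
  mod : ∀ x : M, ∃ a : ℕ, a < k ∧ ∃ z : M, x = a • one + k • z ∨ a • one = x + k • z
  v0 : V 0 = 0 ∧ V one = one
  v1 : (∀ x : M, V (k • x) = k • V x) ∧
    ∀ (d : M) (a : ℕ), (0 < d ∧ V d = d) → 1 ≤ a → a < k → V (a • d) = d
  v2 : ∀ x y : M, 0 < x → 0 < y → V x < V y → V (x + y) = V x
  v3 : ∀ x : M, 0 < x → ∃ y ≤ x, ∃ a : ℕ, 1 ≤ a ∧ a < k ∧
    x = y + a • V x ∧ (V x < V y ∨ y = 0)
  v4 : ∀ x : M, 0 < x → ∃ d : M, (0 < d ∧ V d = d) ∧ d ≤ x ∧ x < k • d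
  v5 : ∀ x : M, V (V x) = V x

/-- `(x)_d = a` : the digit of `x` at position `d` (a power of `k`) equals `a`. -/
def DigitEq {M : Type*} [AddCancelCommMonoid M] [LinearOrder M]
    (V : M → M) (x d : M) (a : ℕ) : Prop :=
  (0 < d ∧ V d = d) ∧ ∃ y < d, ∃ z ≤ x, x = y + a • d + z ∧ (z = 0 ∨ d < V z)

namespace BuchiAxioms

variable {k : ℕ} {M : Type*} [AddCancelCommMonoid M] [LinearOrder M] {one : M} {V : M → M}

theorem le_add_self (H : BuchiAxioms k M one V) (x y : M) : y ≤ x + y := by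
  simpa only [zero_add] using (H.transl 0 x y).1 (H.ord0 x)

theorem le_nsmul (H : BuchiAxioms k M one V) {a : ℕ} (ha : 1 ≤ a) (y : M) : y ≤ a • y := by
  obtain ⟨b, rfl⟩ := Nat.exists_eq_add_of_le' ha
  rw [succ_nsmul]
  exact H.le_add_self _ _

end BuchiAxioms

theorem stmt3 (k : ℕ) (M : Type*) [AddCancelCommMonoid M] [LinearOrder M]
    (one : M) (V : M → M) (H : BuchiAxioms k M one V) :
    ∀ x : M, V x ≤ x := by
  intro x
  rcases (H.ord0 x).eq_or_lt with rfl | hx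
  · exact H.v0.1.le
  · obtain ⟨y, -, a, ha, -, hx_eq, -⟩ := H.v3 x hx
    calc V x ≤ a • V x := H.le_nsmul ha _
      _ ≤ y + a • V x := H.le_add_self _ _
      _ = x := hx_eq.symm
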